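/- arXiv:0907.2726 — 2 statements merged into one kernel-verified Lean document; each statement's English description precedes it below -/
import Mathlib

section
/- Let M be a model category with a set I = {A_i → X_i} of cofibrations between objects such that each A_i is cofibrant and the trivial fibrations of M are exactly the maps with the right lifting property with respect to I. Let X be a fibrant object. If for every K ∈ {A_i, X_i}, the map Ho(M)(K, X) → Ho(M)(K, 1) induced by the unique map e : X → 1 to the terminal object is a bijection, then e : X → 1 is a weak equivalence. -/
open CategoryTheory CategoryTheory.Limits

universe u
section Model

variable (M : Type u) [Category.{u} M]

/-- A class of morphisms is closed under retracts (in the arrow category). -/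
def RetractClosed (P : MorphismProperty M) : Prop :=
  ∀ {X Y X' Y' : M} (f : X ⟶ Y) (g : X' ⟶ Y') (iX : X ⟶ X') (iY : Y ⟶ Y')
    (rX : X' ⟶ X) (rY : Y' ⟶ Y),
    iX ≫ rX = 𝟙 X → iY ≫ rY = 𝟙 Y → iX ≫ g = f ≫ iY → rX ≫ f = g ≫ rY →
    P g → P f

/-- A model structure: weak equivalences, cofibrations and fibrations satisfying
the axioms M2–M5 of a model category (M1 is imposed via `HasLimits`/`HasColimits`
instance assumptions on the underlying category). -/
structure ModelStruct where
  W : MorphismProperty M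
  Cof : MorphismProperty M
  Fib : MorphismProperty M
  W_id : ∀ X : M, W (𝟙 X)
  Cof_id : ∀ X : M, Cof (𝟙 X)
  Fib_id : ∀ X : M, Fib (𝟙 X)
  W_comp : ∀ {X Y Z : M} (f : X ⟶ Y) (g : Y ⟶ Z), W f → W g → W (f ≫ g)
  Cof_comp : ∀ {X Y Z : M} (f : X ⟶ Y) (g : Y ⟶ Z), Cof f → Cof g → Cof (f ≫ g)
  Fib_comp : ∀ {X Y Z : M} (f : X ⟶ Y) (g : Y ⟶ Z), Fib f → Fib g → Fib (f ≫ g)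
  two_of_three_left : ∀ {X Y Z : M} (f : X ⟶ Y) (g : Y ⟶ Z), W g → W (f ≫ g) → W f
  two_of_three_right : ∀ {X Y Z : M} (f : X ⟶ Y) (g : Y ⟶ Z), W f → W (f ≫ g) → W g
  W_retract : RetractClosed M W
  Cof_retract : RetractClosed M Cof
  Fib_retract : RetractClosed M Fib
  lift_cof_trivFib : ∀ {A B X Y : M} (i : A ⟶ B) (p : X ⟶ Y),
    Cof i → Fib p → W p → HasLiftingProperty i p
  lift_trivCof_fib : ∀ {A B X Y : M} (i : A ⟶ B) (p : X ⟶ Y),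
    Cof i → W i → Fib p → HasLiftingProperty i p
  fact_cof_trivFib : ∀ {X Y : M} (f : X ⟶ Y),
    ∃ (Z : M) (i : X ⟶ Z) (p : Z ⟶ Y), Cof i ∧ Fib p ∧ W p ∧ i ≫ p = f
  fact_trivCof_fib : ∀ {X Y : M} (f : X ⟶ Y),
    ∃ (Z : M) (i : X ⟶ Z) (p : Z ⟶ Y), Cof i ∧ W i ∧ Fib p ∧ i ≫ p = f

variable {M}

/-- An object is cofibrant if the map from the initial object is a cofibration. -/
def ModelStruct.Cofibrant [HasInitial M] (m : ModelStruct M) (X : M) : Prop :=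
  m.Cof (initial.to X)

/-- An object is fibrant if the map to the terminal object is a fibration. -/
def ModelStruct.Fibrant [HasTerminal M] (m : ModelStruct M) (X : M) : Prop :=
  m.Fib (terminal.from X)

end Model

/-!
By the assumption on `I`, it suffices that `e : X ⟶ 1` has the right lifting property with
respect to each `f : A ⟶ B` in `I`. Given `t : A ⟶ X`, surjectivity at `B` provides a morphism
`B ⟶ X` of `Ho(M)`, which is the class of some `w : B ⟶ X` since `B` is cofibrant and `X`
fibrant; injectivity at `A` then gives `[f ≫ w] = [t]`, that is, `f ≫ w` and `t` are right
homotopic. Lifting a good path object homotopy along the cofibration `f` (homotopy extension)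
turns `w` into a strict extension of `t`.
-/

lemma RetractClosed.isStableUnderRetracts {M : Type u} [Category.{u} M] {P : MorphismProperty M}
    (hP : RetractClosed M P) : P.IsStableUnderRetracts where
  of_retract r hg := hP _ _ r.i.left r.i.right r.r.left r.r.right r.retract_left r.retract_right
    r.i_w r.r_w hg

open HomotopicalAlgebra in
abbrev ModelStruct.toModelCategory {M : Type u} [Category.{u} M] (m : ModelStruct M)
    [HasFiniteLimits M] [HasFiniteColimits M] : ModelCategory M where
  categoryWithFibrations := ⟨m.Fib⟩
  categoryWithCofibrations := ⟨m.Cof⟩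
  categoryWithWeakEquivalences := ⟨m.W⟩
  cm2 :=
    { comp_mem := m.W_comp
      of_postcomp := m.two_of_three_left
      of_precomp := m.two_of_three_right }
  cm3a := RetractClosed.isStableUnderRetracts m.W_retract
  cm3b := RetractClosed.isStableUnderRetracts m.Fib_retract
  cm3c := RetractClosed.isStableUnderRetracts m.Cof_retract
  cm4a i p hi hw hp := m.lift_trivCof_fib i p hi.mem hw.mem hp.mem
  cm4b i p hi hp hw := m.lift_cof_trivFib i p hi.mem hp.mem hw.mem
  cm5a := ⟨fun f => by
    obtain ⟨Z, i, p, hi, hw, hp, fac⟩ := m.fact_trivCof_fib f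
    exact ⟨{ Z, i, p, fac, hi := ⟨hi, hw⟩, hp }⟩⟩
  cm5b := ⟨fun f => by
    obtain ⟨Z, i, p, hi, hp, hw, fac⟩ := m.fact_cof_trivFib f
    exact ⟨{ Z, i, p, fac, hi, hp := ⟨hp, hw⟩ }⟩⟩

namespace HomotopicalAlgebra

variable {C : Type*} [Category* C] [ModelCategory C]

lemma RightHomotopyRel.exists_extension {A B Y : C} [IsFibrant Y] (i : A ⟶ B) [Cofibration i]
    {g : B ⟶ Y} {t : A ⟶ Y} (h : RightHomotopyRel (i ≫ g) t) : ∃ l : B ⟶ Y, i ≫ l = t := by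
  obtain ⟨P, _, ⟨h⟩⟩ := h.exists_good_pathObject
  obtain ⟨l, h', hh'⟩ := h.homotopy_extension i g
  exact ⟨l, by rw [← h'.h₁, ← Category.assoc, hh', h.h₁]⟩

lemma hasLiftingProperty_terminal_from_of_injective_of_surjective {H : Type*} [Category* H]
    (L : C ⥤ H) [L.IsLocalization (weakEquivalences C)] {A B Y : C} (i : A ⟶ B) [Cofibration i]
    [IsCofibrant A] [IsFibrant Y]
    (hA : Function.Injective fun g : L.obj A ⟶ L.obj Y => g ≫ L.map (terminal.from Y))
    (hB : Function.Surjective fun g : L.obj B ⟶ L.obj Y => g ≫ L.map (terminal.from Y)) :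
    HasLiftingProperty i (terminal.from Y) where
  sq_hasLift {t _} _ := by
    have : IsCofibrant B := isCofibrant_of_cofibration i
    obtain ⟨g, hg⟩ := hB (L.map (terminal.from B))
    obtain ⟨w, rfl⟩ := map_surjective_of_isLocalization L B Y g
    have hL : L.map (i ≫ w) = L.map t := hA <| by
      dsimp only at hg ⊢
      rw [L.map_comp, Category.assoc, hg, ← L.map_comp, ← L.map_comp]
      congr 1
      exact terminal.hom_ext _ _
    obtain ⟨l, hl⟩ := ((RightHomotopyRel.iff_map_eq L A Y).2 hL).exists_extension i
    exact ⟨⟨{ l, fac_left := hl, fac_right := terminal.hom_ext _ _ }⟩⟩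

end HomotopicalAlgebra

open HomotopicalAlgebra

/-- Let `I = {Aᵢ → Xᵢ}` be a set of cofibrations with each
`Aᵢ` cofibrant such that the trivial fibrations are exactly the maps with the
right lifting property with respect to `I`. If `X` is fibrant and for every
`K ∈ {Aᵢ, Xᵢ}` the map `Ho(M)(K, X) → Ho(M)(K, 1)` is a bijection, then the
unique map `e : X → 1` is a weak equivalence. -/
theorem weakEquivalence_to_terminal_of_bijective {M : Type u} [Category.{u} M]
    [HasLimits M] [HasColimits M] (m : ModelStruct M)
    {ι : Type u} (A B : ι → M) (f : ∀ k, A k ⟶ B k)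
    (hcof : ∀ k, m.Cof (f k)) (hAcof : ∀ k, m.Cofibrant (A k))
    (hgen : ∀ {X Y : M} (p : X ⟶ Y),
      (m.Fib p ∧ m.W p) ↔ ∀ k, HasLiftingProperty (f k) p)
    (X : M) (hX : m.Fibrant X)
    (hbij : ∀ k,
      Function.Bijective (fun g : m.W.Q.obj (A k) ⟶ m.W.Q.obj X =>
        g ≫ m.W.Q.map (terminal.from X)) ∧
      Function.Bijective (fun g : m.W.Q.obj (B k) ⟶ m.W.Q.obj X =>
        g ≫ m.W.Q.map (terminal.from X))) :
    m.W (terminal.from X) := by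
  let := m.toModelCategory
  have : m.W.Q.IsLocalization (weakEquivalences M) := inferInstanceAs (m.W.Q.IsLocalization m.W)
  have : IsFibrant X := ⟨hX⟩
  have hlift (k : ι) : HasLiftingProperty (f k) (terminal.from X) :=
    have : Cofibration (f k) := ⟨hcof k⟩
    have : IsCofibrant (A k) := ⟨hAcof k⟩
    hasLiftingProperty_terminal_from_of_injective_of_surjective m.W.Q (f k)
      (hbij k).1.injective (hbij k).2.surjective
  exact ((hgen _).2 hlift).2
end

section
/- Let M be a model category, i : A → B a cofibration with A cofibrant, X a fibrant object, f : A → X a map, and h : B → X a map such that h ∘ i is homotopic to f. Then there exists a map h' : B → X with h' ∘ i = f (strictly). In other words, for a cofibration with cofibrant domain and fibrant target, a lift that exists up to homotopy can be rectified to a strict lift. -/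
open CategoryTheory CategoryTheory.Limits

universe u
/-!
Glue `h` and the homotopy `H` into a map `G : P ⟶ X` out of the pushout `P = B ⊔_A Cyl(A)`
taken along the end `i1`. As `i1` is a trivial cofibration, so is `B ⟶ P`, hence the collapse
`ρ : P ⟶ B` is a weak equivalence. Factor `ρ` as a trivial cofibration `k` followed by a trivial
fibration `q`. Since `X` is fibrant, `G` extends over `k`; lifting `i` against `q` gives a section
`s` of `q` that restricts on `A` to the other end `i0`. Then `s` followed by the extension of `G`
restricts to `i0 ≫ H = f`.
-/

namespace ModelStruct

open MorphismProperty

variable {M : Type u} [Category.{u} M]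

lemma isStableUnderRetracts_of_retractClosed {P : MorphismProperty M} (hP : RetractClosed M P) :
    P.IsStableUnderRetracts where
  of_retract h hg :=
    hP _ _ h.i.left h.i.right h.r.left h.r.right h.retract_left h.retract_right h.i_w h.r_w hg

variable (m : ModelStruct M)

def trivCof : MorphismProperty M := m.Cof ⊓ m.W

def trivFib : MorphismProperty M := m.Fib ⊓ m.W

instance : m.Cof.IsStableUnderRetracts := isStableUnderRetracts_of_retractClosed m.Cof_retract

instance : m.W.IsStableUnderRetracts := isStableUnderRetracts_of_retractClosed m.W_retract

instance : m.trivCof.IsStableUnderRetracts := inferInstanceAs (m.Cof ⊓ m.W).IsStableUnderRetracts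

instance : HasFactorization m.Cof m.trivFib where
  nonempty_mapFactorizationData f := by
    obtain ⟨Z, i, p, hi, hp, hpw, hfac⟩ := m.fact_cof_trivFib f
    exact ⟨{ Z := Z, i := i, p := p, fac := hfac, hi := hi, hp := ⟨hp, hpw⟩ }⟩

instance : HasFactorization m.trivCof m.Fib where
  nonempty_mapFactorizationData f := by
    obtain ⟨Z, i, p, hi, hiw, hp, hfac⟩ := m.fact_trivCof_fib f
    exact ⟨{ Z := Z, i := i, p := p, fac := hfac, hi := ⟨hi, hiw⟩, hp := hp }⟩

lemma trivFib_llp_eq_cof : m.trivFib.llp = m.Cof :=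
  llp_eq_of_le_llp_of_hasFactorization_of_isStableUnderRetracts
    fun _ _ i hi _ _ _ hp => m.lift_cof_trivFib i _ hi hp.1 hp.2

lemma fib_llp_eq_trivCof : m.Fib.llp = m.trivCof :=
  llp_eq_of_le_llp_of_hasFactorization_of_isStableUnderRetracts
    fun _ _ i hi _ _ _ hp => m.lift_trivCof_fib i _ hi.1 hi.2 hp

instance : m.Cof.IsStableUnderCobaseChange := m.trivFib_llp_eq_cof ▸ inferInstance

instance : m.trivCof.IsStableUnderCobaseChange := m.fib_llp_eq_trivCof ▸ inferInstance

lemma cof_coprod_inr [HasInitial M] [HasBinaryCoproducts M] {A : M} (hA : m.Cofibrant A)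
    (B : M) : m.Cof (coprod.inr : B ⟶ A ⨿ B) :=
  IsStableUnderCobaseChange.of_isPushout (IsPushout.of_hasBinaryCoproduct' A B).flip hA

lemma trivCof_of_cylinder_end [HasInitial M] [HasBinaryCoproducts M] {A CylA : M}
    (hA : m.Cofibrant A) (i0 i1 : A ⟶ CylA) (σ : CylA ⟶ A) (hcyl : m.Cof (coprod.desc i0 i1))
    (hσ : m.W σ) (h1 : i1 ≫ σ = 𝟙 A) : m.trivCof i1 :=
  ⟨coprod.inr_desc i0 i1 ▸ m.Cof_comp _ _ (m.cof_coprod_inr hA A) hcyl,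
    m.two_of_three_left i1 σ hσ (h1 ▸ m.W_id A)⟩

lemma exists_extension_of_fibrant [HasTerminal M] {P Z X : M} {k : P ⟶ Z} (hk : m.trivCof k)
    (hX : m.Fibrant X) (g : P ⟶ X) : ∃ g' : Z ⟶ X, k ≫ g' = g := by
  have := m.lift_trivCof_fib k _ hk.1 hk.2 hX
  let sq : CommSq g k (terminal.from X) (terminal.from Z) := ⟨terminal.hom_ext _ _⟩
  exact ⟨sq.lift, sq.fac_left⟩

lemma exists_comp_eq_comp_of_W [HasTerminal M] {A B P X : M} {i : A ⟶ B} (hi : m.Cof i)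
    {w : P ⟶ B} (hw : m.W w) (a : A ⟶ P) (ha : a ≫ w = i) (hX : m.Fibrant X) (g : P ⟶ X) :
    ∃ g' : B ⟶ X, i ≫ g' = a ≫ g := by
  obtain ⟨Z, k, q, hk, hq, hqw, hfac⟩ := m.fact_cof_trivFib w
  have hkw : m.W k := m.two_of_three_left k q hqw (hfac ▸ hw)
  obtain ⟨g', hg'⟩ := m.exists_extension_of_fibrant ⟨hk, hkw⟩ hX g
  have := m.lift_cof_trivFib i q hi hq hqw
  let sq : CommSq (a ≫ k) i q (𝟙 B) := ⟨by rw [Category.assoc, hfac, ha, Category.comp_id]⟩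
  exact ⟨sq.lift ≫ g', by rw [← Category.assoc, sq.fac_left, Category.assoc, hg']⟩

end ModelStruct

/-- For a cofibration `i : A → B` with `A` cofibrant and `X`
fibrant, a lift that exists up to homotopy can be rectified to a strict lift:
if `h ∘ i` is homotopic to `f`, then there is `h' : B → X` with `h' ∘ i = f`. -/
theorem rectify_homotopy_lift {M : Type u} [Category.{u} M]
    [HasLimits M] [HasColimits M] (m : ModelStruct M)
    {A B X : M} (i : A ⟶ B) (hi : m.Cof i) (hA : m.Cofibrant A)
    (hX : m.Fibrant X)
    -- a cylinder object for `A`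
    (CylA : M) (i0 i1 : A ⟶ CylA) (σ : CylA ⟶ A)
    (hcyl : m.Cof (coprod.desc i0 i1)) (hσ : m.W σ)
    (h0 : i0 ≫ σ = 𝟙 A) (h1 : i1 ≫ σ = 𝟙 A)
    (f : A ⟶ X) (h : B ⟶ X)
    -- a homotopy from `f` to `h ∘ i`
    (H : CylA ⟶ X) (hH0 : i0 ≫ H = f) (hH1 : i1 ≫ H = i ≫ h) :
    ∃ h' : B ⟶ X, i ≫ h' = f := by
  have hi1 : m.trivCof i1 := m.trivCof_of_cylinder_end hA i0 i1 σ hcyl hσ h1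
  have hinl : m.trivCof (pushout.inl i i1) :=
    MorphismProperty.IsStableUnderCobaseChange.of_isPushout (IsPushout.of_hasPushout i i1) hi1
  let ρ : pushout i i1 ⟶ B := pushout.desc (𝟙 B) (σ ≫ i) (by rw [reassoc_of% h1, Category.comp_id])
  have hρ : m.W ρ := m.two_of_three_right _ ρ hinl.2 (by rw [pushout.inl_desc]; exact m.W_id B)
  obtain ⟨h', hh'⟩ := m.exists_comp_eq_comp_of_W hi hρ (i0 ≫ pushout.inr i i1)
    (by rw [Category.assoc, pushout.inr_desc, reassoc_of% h0]) hX (pushout.desc h H hH1.symm)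
  exact ⟨h', by rw [hh', Category.assoc, pushout.inr_desc, hH0]⟩
end
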